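/- Let p be a prime and let R be a finite (p + 2)-centralizer p-ring (so that the additive quotient group R/Z(R) is isomorphic to ℤ_p × ℤ_p). Then the characteristic polynomial of the adjacency matrix of the commuting graph Γ_R equals (X + 1)^{(p² − 1)|Z(R)| − p − 1} · (X − ((p − 1)|Z(R)| − 1))^{p + 1}. -/

import Mathlib

open Polynomial Matrix

/-- The center of a (possibly non-unital) ring, as a set. -/
def ringCenter (R : Type*) [NonUnitalRing R] : Set R :=
  {z : R | ∀ r : R, r * z = z * r}

/-- The centralizer of an element of a (possibly non-unital) ring, as a set. -/
def ringCentralizer {R : Type*} [NonUnitalRing R] (r : R) : Set R :=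
  {s : R | r * s = s * r}

/-- The commuting graph of a ring: vertices are the non-central elements, and two
distinct vertices are adjacent iff they commute. -/
def commGraph (R : Type*) [NonUnitalRing R] :
    SimpleGraph {x : R // x ∉ ringCenter R} where
  Adj x y := x ≠ y ∧ (x : R) * (y : R) = (y : R) * (x : R)
  symm := ⟨fun _ _ h => ⟨h.1.symm, h.2.symm⟩⟩
  loopless := ⟨fun _ h => h.1 rfl⟩

/-- The characteristic polynomial (over `K`) of the adjacency matrix of the
commuting graph of a finite ring. -/
noncomputable def commCharpoly (R : Type*) [NonUnitalRing R] [Fintype R]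
    (K : Type*) [CommRing K] : Polynomial K := by
  classical
  exact ((commGraph R).adjMatrix K).charpoly

/-- The center of a (possibly non-unital) ring, as an additive subgroup. -/
def centerAddSubgroup (R : Type*) [NonUnitalRing R] : AddSubgroup R where
  carrier := ringCenter R
  add_mem' := by
    intro a b ha hb r
    rw [mul_add, add_mul, ha r, hb r]
  zero_mem' := by
    intro r
    simp
  neg_mem' := by
    intro a ha r
    rw [mul_neg, neg_mul, ha r]



lemma det_aux (m : ℕ) (K : Type*) [Field K] (d : K) (hd : d ≠ 0) :
    det ((d • (1 : Matrix (Fin m) (Fin m) K)) - Matrix.of (fun _ _ => (1:K))) = d^m - m * d^(m-1) := by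
  have h1 : (d • (1 : Matrix (Fin m) (Fin m) K)) - Matrix.of (fun _ _ => (1:K))
      = d • (1 + replicateCol Unit (fun _ => -d⁻¹) * replicateRow Unit (fun _ => (1:K))) := by
    ext i j
    simp [Matrix.one_apply, mul_ite, Matrix.mul_apply, Matrix.smul_apply, hd]
    by_cases h : i = j <;>
      simp [h, mul_add, mul_inv_cancel₀ hd, sub_eq_add_neg]
  rw [h1, Matrix.det_smul, Matrix.det_one_add_replicateCol_mul_replicateRow]
  simp [dotProduct]
  rcases Nat.eq_zero_or_pos m with hm | hm
  · simp [hm]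
  · have h2 : d ^ m * d⁻¹ = d ^ (m-1) := by
      nth_rewrite 1 [← pow_sub_one_mul (Nat.one_le_iff_ne_zero.mp hm) d]
      rw [mul_assoc, mul_inv_cancel₀ hd, mul_one]
    rw [mul_add, mul_one, mul_neg, mul_comm (m:K), ← mul_assoc, h2, ← sub_eq_add_neg, mul_comm ((m:K))]

lemma clique_charpoly (m : ℕ) (hm : 1 ≤ m) :
    (Matrix.of (fun i j => if i = j then 0 else 1) : Matrix (Fin m) (Fin m) ℤ).charpoly
      = (X+1)^(m-1) * (X - C ((m:ℤ)-1)) := by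
  set A : Matrix (Fin m) (Fin m) ℤ := Matrix.of (fun i j => if i = j then 0 else 1) with hA
  set K := FractionRing (Polynomial ℤ)
  set φ : Polynomial ℤ →+* K := (algebraMap (Polynomial ℤ) K : Polynomial ℤ →+* K) with hφ
  have hinj : Function.Injective φ := IsFractionRing.injective (Polynomial ℤ) K
  have hd : φ (X+1) ≠ 0 := by
    intro h
    have : (X + 1 : Polynomial ℤ) ≠ 0 := by
      simpa using Polynomial.X_add_C_ne_zero (1:ℤ)
    exact this (hinj (by simpa using h))
  have hmap : (charmatrix A).map φ
      = (φ (X+1)) • (1 : Matrix (Fin m) (Fin m) K) - Matrix.of (fun _ _ => (1:K)) := by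
    ext i j
    by_cases h : i = j <;>
      simp [h, charmatrix_apply_eq, charmatrix_apply_ne, hA, Matrix.one_apply, map_add,
        sub_eq_add_neg, add_comm]
  have key : φ A.charpoly = φ ((X+1)^m - (m : Polynomial ℤ) * (X+1)^(m-1)) := by
    rw [Matrix.charpoly, RingHom.map_det, RingHom.mapMatrix_apply, hmap, det_aux _ _ _ hd]
    simp [map_sub, _root_.map_mul, map_pow]
  have key2 : A.charpoly = (X+1)^m - (m : Polynomial ℤ) * (X+1)^(m-1) := hinj key
  obtain ⟨n, rfl⟩ : ∃ n, m = n + 1 := ⟨m - 1, by omega⟩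
  rw [key2]
  simp only [Nat.add_sub_cancel]
  rw [show ((n+1:ℕ):ℤ) - 1 = (n:ℤ) by push_cast; ring, Polynomial.C_eq_natCast]
  push_cast
  ring

lemma charpoly_blockDiagonal {n ι : Type*} [Fintype n] [DecidableEq n] [Fintype ι] [DecidableEq ι]
    {R : Type*} [CommRing R] (A : Matrix n n R) :
    (Matrix.blockDiagonal fun _ : ι => A).charpoly = A.charpoly ^ (Fintype.card ι) := by
  have h : charmatrix (Matrix.blockDiagonal fun _ : ι => A)
      = Matrix.blockDiagonal (fun _ : ι => charmatrix A) := by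
    ext ⟨i,k⟩ ⟨j,l⟩
    by_cases hkl : k = l
    · subst hkl
      by_cases hij : i = j
      · subst hij; simp [charmatrix_apply_eq, Matrix.blockDiagonal_apply]
      · rw [charmatrix_apply_ne _ _ _ (by simp [hij])]
        simp [hij, Matrix.blockDiagonal_apply, charmatrix_apply_ne _ _ _ hij]
    · rw [charmatrix_apply_ne _ _ _ (by simp [hkl])]
      simp [Matrix.blockDiagonal_apply, hkl]
  rw [Matrix.charpoly, h, Matrix.det_blockDiagonal]
  simp [Matrix.charpoly, Finset.prod_const]

lemma charpoly_of_cliques {V ι : Type*} [Fintype V] [DecidableEq V] [Fintype ι] [DecidableEq ι]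
    (G : SimpleGraph V) [DecidableRel G.Adj] (f : V → ι) (m : ℕ) (hm : 1 ≤ m)
    (hadj : ∀ x y : V, G.Adj x y ↔ (x ≠ y ∧ f x = f y))
    (hcard : ∀ i, Fintype.card {x // f x = i} = m) :
    (G.adjMatrix ℤ).charpoly
      = ((X+1)^(m-1) * (X - C ((m:ℤ)-1))) ^ (Fintype.card ι) := by
  classical
  let e0 : ∀ i : ι, {x // f x = i} ≃ Fin m := fun i => Fintype.equivFinOfCardEq (hcard i)
  let e : V ≃ Fin m × ι :=
    ((Equiv.sigmaFiberEquiv f).symm.trans ((Equiv.sigmaCongrRight e0).trans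
      (Equiv.sigmaEquivProd ι (Fin m)))).trans (Equiv.prodComm ι (Fin m))
  have he2 : ∀ x : V, (e x).2 = f x := fun x => rfl
  have hmat : G.adjMatrix ℤ = ((Matrix.blockDiagonal fun _ : ι =>
      (Matrix.of (fun i j => if i = j then 0 else 1) : Matrix (Fin m) (Fin m) ℤ))).submatrix e e := by
    ext x y
    simp only [Matrix.submatrix_apply, Matrix.blockDiagonal_apply, SimpleGraph.adjMatrix_apply,
      Matrix.of_apply, hadj]
    rw [he2, he2]
    by_cases hf : f x = f y
    · simp only [hf, if_true]
      by_cases hxy : x = y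
      · subst hxy; simp
      · have h1 : (e x).1 ≠ (e y).1 := by
          intro h
          apply hxy
          apply e.injective
          exact Prod.ext h (by rw [he2, he2, hf])
        simp [hxy, hf, h1]
    · simp [hf]
  rw [hmat]
  have : ((Matrix.blockDiagonal fun _ : ι =>
      (Matrix.of (fun i j => if i = j then 0 else 1) : Matrix (Fin m) (Fin m) ℤ))).submatrix e e
      = Matrix.reindex e.symm e.symm (Matrix.blockDiagonal fun _ : ι =>
      (Matrix.of (fun i j => if i = j then 0 else 1) : Matrix (Fin m) (Fin m) ℤ)) := by
    simp [Matrix.reindex_apply]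
  rw [this, Matrix.charpoly_reindex, charpoly_blockDiagonal, clique_charpoly m hm]

private theorem part1aux (p : ℕ) (hp : p.Prime) (R : Type*) [NonUnitalRing R] [Fintype R]
    (hpring : ∃ k : ℕ, Fintype.card R = p ^ k)
    (hcent : {S : Set R | ∃ r : R, S = ringCentralizer r}.ncard = p + 2) :
    ∃ g : ℕ → R,
      (∀ i ≤ p, ∀ x : R, x ∉ ringCenter R → x ∈ ringCentralizer (g i) →
          ringCentralizer x = ringCentralizer (g i)) ∧
      (∀ x : R, x ∉ ringCenter R → ∃ i ≤ p, x ∈ ringCentralizer (g i)) ∧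
      (∀ i j, i ≤ p → j ≤ p → i ≠ j →
          ringCentralizer (g i) ∩ ringCentralizer (g j) ⊆ ringCenter R) ∧
      (∀ i ≤ p, (ringCentralizer (g i)).ncard = p * (ringCenter R).ncard) ∧
      (∀ i, ringCenter R ⊆ ringCentralizer (g i)) := by
  classical
  obtain ⟨k, hk⟩ := hpring
  have hp2 : 2 ≤ p := hp.two_le
  have hsmul_mul : ∀ (j : ℕ) (x y : R), (j • x) * y = j • (x * y) := by
    intro j x y; induction j with
    | zero => simp
    | succ n ih => simp [succ_nsmul, add_mul, ih]
  have hmul_smul : ∀ (j : ℕ) (x y : R), x * (j • y) = j • (x * y) := by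
    intro j x y; induction j with
    | zero => simp
    | succ n ih => simp [succ_nsmul, mul_add, ih]
  have hkill : ∀ (c : R) (j : ℕ), ¬ (p ∣ j) → j • c = 0 → c = 0 := by
    intro c j hj hc
    have h1 : addOrderOf c ∣ p ^ k := hk ▸ addOrderOf_dvd_card
    have h2 : addOrderOf c ∣ j := addOrderOf_dvd_of_nsmul_eq_zero hc
    have h4 : Nat.Coprime (p ^ k) j :=
      Nat.Coprime.pow_left k ((Nat.Prime.coprime_iff_not_dvd hp).mpr hj)
    have h3 : addOrderOf c ∣ 1 := h4 ▸ Nat.dvd_gcd h1 h2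
    simpa using Nat.dvd_one.mp h3
  obtain ⟨a, b, hab⟩ : ∃ a b : R, a * b ≠ b * a := by
    by_contra h
    push_neg at h
    have huniv : {S : Set R | ∃ r : R, S = ringCentralizer r} = {Set.univ} := by
      ext S
      constructor
      · rintro ⟨r, rfl⟩
        simp only [Set.mem_singleton_iff]
        ext s
        simp [ringCentralizer, h r s]
      · rintro rfl
        exact ⟨0, by ext s; simp [ringCentralizer]⟩
    rw [huniv, Set.ncard_singleton] at hcent
    omega
  set g : ℕ → R := fun i => if i = p then b else a + i • b with hg
  refine ⟨g, ?_⟩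
  -- g i is noncentral
  have hgZ : ∀ i ≤ p, g i ∉ ringCenter R := by
    intro i hip hmem
    by_cases hipeq : i = p
    · exact hab (by simpa [hg, hipeq] using hmem a)
    · have h1 : b * (a + i • b) = (a + i • b) * b := by
        have := hmem b
        simpa [hg, hipeq] using this
      rw [mul_add, add_mul, hmul_smul, hsmul_mul] at h1
      exact hab (by

        have := add_right_cancel h1
        exact this.symm)
  have memC : ∀ r s : R, s ∈ ringCentralizer r ↔ r * s = s * r := fun _ _ => Iff.rfl
  have hndvd : ∀ i j : ℕ, i < j → j - i < p → ¬ (p ∣ (j - i)) := by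
    intro i j h1 h2 hd
    exact absurd (Nat.le_of_dvd (by omega) hd) (by omega)
  have hpair : ∀ i j, i < j → j ≤ p → ∀ t : R, g i * t = t * g i → g j * t = t * g j →
      a * t = t * a ∧ b * t = t * b := by
    intro i j hij hjp t hti htj
    have hip : i < p := lt_of_lt_of_le hij hjp
    have hexp : a * t + i • (b * t) = t * a + i • (t * b) := by
      have h := hti
      rw [show g i = a + i • b by simp [hg, Nat.ne_of_lt hip], add_mul, mul_add,
        hsmul_mul, hmul_smul] at h
      exact h
    have hbt : b * t = t * b := by
      by_cases hjpeq : j = p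
      · simpa [hg, hjpeq] using htj
      · have hexpj : a * t + j • (b * t) = t * a + j • (t * b) := by
          have h := htj
          rw [show g j = a + j • b by simp [hg, hjpeq], add_mul, mul_add,
            hsmul_mul, hmul_smul] at h
          exact h
        have hsub : (j - i) • (b * t) = (j - i) • (t * b) := by
          have hj' : j • (b * t) = (j - i) • (b * t) + i • (b * t) := by
            rw [← add_nsmul]; congr 1; omega
          have hj'' : j • (t * b) = (j - i) • (t * b) + i • (t * b) := by
            rw [← add_nsmul]; congr 1; omega
          rw [hj', hj''] at hexpj
          have h2 : (a * t + i • (b * t)) + (j - i) • (b * t)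
              = (t * a + i • (t * b)) + (j - i) • (t * b) := by
            calc (a * t + i • (b * t)) + (j - i) • (b * t)
                = a * t + ((j - i) • (b * t) + i • (b * t)) := by abel
              _ = t * a + ((j - i) • (t * b) + i • (t * b)) := hexpj
              _ = (t * a + i • (t * b)) + (j - i) • (t * b) := by abel
          rw [hexp] at h2
          exact add_left_cancel h2
        have hz : (j - i) • (b * t - t * b) = 0 := by
          rw [smul_sub, hsub, sub_self]
        have := hkill _ (j - i) (hndvd i j hij (by omega)) hz
        exact sub_eq_zero.mp this
    refine ⟨?_, hbt⟩
    rw [hbt] at hexp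
    exact add_right_cancel hexp
  have hcomb : ∀ t : R, a * t = t * a → b * t = t * b → ∀ i, g i * t = t * g i := by
    intro t hat hbt i
    by_cases hipeq : i = p
    · simpa [hg, hipeq] using hbt
    · rw [show g i = a + i • b by simp [hg, hipeq], add_mul, mul_add, hsmul_mul, hmul_smul,
        hat, hbt]
  have hdist : ∀ i j, i < j → j ≤ p → ringCentralizer (g i) ≠ ringCentralizer (g j) := by
    intro i j hij hjp heq
    have hip : i < p := lt_of_lt_of_le hij hjp
    have hti : g i ∈ ringCentralizer (g i) := (memC _ _).mpr rfl
    have htj : g i ∈ ringCentralizer (g j) := heq ▸ hti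
    have hbt := (hpair i j hij hjp (g i) ((memC _ _).mp hti) ((memC _ _).mp htj)).2
    rw [show g i = a + i • b by simp [hg, Nat.ne_of_lt hip], mul_add, add_mul,
      hmul_smul, hsmul_mul] at hbt
    exact hab (add_right_cancel hbt).symm
  have hunivC : (Set.univ : Set R) = ringCentralizer (0 : R) := by
    ext s; simp [ringCentralizer]
  set F : Finset (Set R) :=
    insert Set.univ ((Finset.range (p+1)).image (fun i => ringCentralizer (g i))) with hF
  have hDneU : ∀ i ≤ p, ringCentralizer (g i) ≠ Set.univ := by
    intro i hip heq
    apply hgZ i hip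
    intro r
    have : r ∈ ringCentralizer (g i) := heq ▸ Set.mem_univ r
    exact ((memC _ _).mp this).symm
  have hinj : Set.InjOn (fun i => ringCentralizer (g i)) ↑(Finset.range (p+1)) := by
    intro i hi j hj hij'
    simp only [Finset.coe_range, Set.mem_Iio] at hi hj
    by_contra hne
    rcases Nat.lt_or_ge i j with h | h
    · exact hdist i j h (by omega) hij'
    · exact hdist j i (by omega) (by omega) hij'.symm
  have hUnotmem : Set.univ ∉ (Finset.range (p+1)).image (fun i => ringCentralizer (g i)) := by
    intro hmem
    obtain ⟨i, hi, heq⟩ := Finset.mem_image.mp hmem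
    exact hDneU i (Nat.lt_succ_iff.mp (Finset.mem_range.mp hi)) heq
  have hFcard : F.card = p + 2 := by
    rw [hF, Finset.card_insert_of_notMem hUnotmem, Finset.card_image_of_injOn hinj,
      Finset.card_range]
  have hsub : ↑F ⊆ {S : Set R | ∃ r : R, S = ringCentralizer r} := by
    intro S hS
    simp only [hF, Finset.coe_insert, Set.mem_insert_iff, Finset.coe_image,
      Set.mem_image, Finset.mem_coe, Finset.mem_range] at hS
    rcases hS with rfl | ⟨i, hi, rfl⟩
    · exact ⟨0, hunivC⟩
    · exact ⟨g i, rfl⟩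
  have hSF : {S : Set R | ∃ r : R, S = ringCentralizer r} = ↑F := by
    refine (Set.eq_of_subset_of_ncard_le hsub ?_ (Set.toFinite _)).symm
    rw [hcent, Set.ncard_coe_finset, hFcard]
  have hmemF : ∀ S : Set R, S ∈ F →
      S = Set.univ ∨ ∃ i ≤ p, S = ringCentralizer (g i) := by
    intro S hS
    rw [hF, Finset.mem_insert] at hS
    rcases hS with h | h
    · exact Or.inl h
    · obtain ⟨i, hi, heq⟩ := Finset.mem_image.mp h
      exact Or.inr ⟨i, Nat.lt_succ_iff.mp (Finset.mem_range.mp hi), heq.symm⟩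
  have hCmemF : ∀ r : R, ringCentralizer r ∈ F := by
    intro r
    have : ringCentralizer r ∈ {S : Set R | ∃ r : R, S = ringCentralizer r} := ⟨r, rfl⟩
    rw [hSF] at this
    exact this
  have hZchar : ∀ t : R, a * t = t * a → b * t = t * b → t ∈ ringCenter R := by
    intro t hat hbt
    show ∀ r : R, r * t = t * r
    intro r
    have htr : t ∈ ringCentralizer r := by
      rcases hmemF _ (hCmemF r) with heq | ⟨i, hi, heq⟩
      · rw [heq]; trivial
      · rw [heq]
        exact (memC _ _).mpr (hcomb t hat hbt i)
    exact (memC r t).mp htr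
  have hinter : ∀ i j, i ≤ p → j ≤ p → i ≠ j →
      ringCentralizer (g i) ∩ ringCentralizer (g j) ⊆ ringCenter R := by
    intro i j hip hjp hij t ht
    rcases Nat.lt_or_ge i j with h | h
    · obtain ⟨h1, h2⟩ := hpair i j h hjp t ((memC _ _).mp ht.1) ((memC _ _).mp ht.2)
      exact hZchar t h1 h2
    · obtain ⟨h1, h2⟩ := hpair j i (by omega) hip t ((memC _ _).mp ht.2) ((memC _ _).mp ht.1)
      exact hZchar t h1 h2
  have hZD : ∀ i, ringCenter R ⊆ ringCentralizer (g i) := by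
    intro i z hz
    exact (memC _ _).mpr (hz (g i))
  have hCx : ∀ x : R, x ∉ ringCenter R → ∃ i ≤ p, ringCentralizer x = ringCentralizer (g i) := by
    intro x hx
    rcases hmemF _ (hCmemF x) with heq | ⟨i, hi, heq⟩
    · exfalso
      apply hx
      show ∀ r : R, r * x = x * r
      intro r
      have : r ∈ ringCentralizer x := heq ▸ Set.mem_univ r
      exact ((memC _ _).mp this).symm
    · exact ⟨i, hi, heq⟩
  have hCuniq : ∀ i ≤ p, ∀ x : R, x ∉ ringCenter R → x ∈ ringCentralizer (g i) →
      ringCentralizer x = ringCentralizer (g i) := by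
    intro i hip x hx hxi
    obtain ⟨j, hjp, heq⟩ := hCx x hx
    by_cases hij : j = i
    · rw [heq, hij]
    · exfalso
      apply hx
      apply hinter j i hjp hip hij
      exact ⟨heq ▸ ((memC _ _).mpr rfl : x ∈ ringCentralizer x), hxi⟩
  -- counting
  have hCsub : ∀ (i : ℕ) (x y : R), x ∈ ringCentralizer (g i) → y ∈ ringCentralizer (g i) →
      x - y ∈ ringCentralizer (g i) := by
    intro i x y hx hy
    show g i * (x - y) = (x - y) * g i
    rw [mul_sub, sub_mul, (memC _ _).mp hx, (memC _ _).mp hy]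
  set N := Fintype.card R with hN
  set zF : Finset R := (ringCenter R).toFinset with hzF
  set z := zF.card with hz
  set DF : ℕ → Finset R := fun i => (ringCentralizer (g i)).toFinset with hDF
  have hZFD : ∀ i, zF ⊆ DF i := by
    intro i x hx
    rw [hDF]
    rw [hzF, Set.mem_toFinset] at hx
    rw [Set.mem_toFinset]
    exact hZD i hx
  have hgDF : ∀ i, g i ∈ DF i := by
    intro i; rw [hDF]; rw [Set.mem_toFinset]; exact (memC _ _).mpr rfl
  have hDFcap : ∀ i j, i ≤ p → j ≤ p → i ≠ j → ∀ x, x ∈ DF i → x ∈ DF j → x ∈ zF := by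
    intro i j hip hjp hij x h1 h2
    rw [hDF, Set.mem_toFinset] at h1 h2
    rw [hzF, Set.mem_toFinset]
    exact hinter i j hip hjp hij ⟨h1, h2⟩
  have hdisj : ∀ i ∈ Finset.range (p+1), ∀ j ∈ Finset.range (p+1), i ≠ j →
      Disjoint (DF i \ zF) (DF j \ zF) := by
    intro i hi j hj hij
    rw [Finset.disjoint_left]
    intro x hxi hxj
    rw [Finset.mem_sdiff] at hxi hxj
    exact hxi.2 (hDFcap i j (Nat.lt_succ_iff.mp (Finset.mem_range.mp hi))
      (Nat.lt_succ_iff.mp (Finset.mem_range.mp hj)) hij x hxi.1 hxj.1)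
  have hpart : Finset.univ \ zF = (Finset.range (p+1)).biUnion (fun i => DF i \ zF) := by
    ext x
    simp only [Finset.mem_sdiff, Finset.mem_univ, true_and, Finset.mem_biUnion, Finset.mem_range]
    constructor
    · intro hx
      have hx' : x ∉ ringCenter R := by
        rw [hzF, Set.mem_toFinset] at hx
        exact hx
      obtain ⟨i, hip, heq⟩ := hCx x hx'
      refine ⟨i, by omega, ?_, hx⟩
      rw [hDF, Set.mem_toFinset, ← heq]
      exact (memC _ _).mpr rfl
    · rintro ⟨i, _, hx1, hx2⟩
      exact hx2
  have hzleD : ∀ i, z ≤ (DF i).card := fun i => Finset.card_le_card (hZFD i)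
  have hzleN : z ≤ N := by
    rw [hN, ← Finset.card_univ]
    exact Finset.card_le_card (Finset.subset_univ _)
  have hcard1 : N - z = ∑ i ∈ Finset.range (p+1), ((DF i).card - z) := by
    have h0 : (Finset.univ \ zF).card = ∑ i ∈ Finset.range (p+1), (DF i \ zF).card := by
      rw [hpart]
      exact Finset.card_biUnion hdisj
    rw [Finset.card_sdiff_of_subset (Finset.subset_univ _), Finset.card_univ, ← hN] at h0
    rw [h0]
    exact Finset.sum_congr rfl (fun i _ => Finset.card_sdiff_of_subset (hZFD i))
  have hsumZ : (N : ℤ) + p * z = ∑ i ∈ Finset.range (p+1), ((DF i).card : ℤ) := by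
    have h1 : ((N - z : ℕ) : ℤ) = ∑ i ∈ Finset.range (p+1), (((DF i).card - z : ℕ) : ℤ) := by
      rw [hcard1]
      push_cast
      rfl
    rw [Nat.cast_sub hzleN] at h1
    rw [Finset.sum_congr rfl (fun i _ => Nat.cast_sub (hzleD i))] at h1
    rw [Finset.sum_sub_distrib, Finset.sum_const, Finset.card_range] at h1
    simp only [nsmul_eq_mul] at h1
    push_cast at h1 ⊢
    linarith
  -- subgroups
  let Dsub : ℕ → AddSubgroup R := fun i =>
    { carrier := ringCentralizer (g i)
      add_mem' := fun {x y} hx hy => by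
        show g i * (x + y) = (x + y) * g i
        rw [mul_add, add_mul, (memC _ _).mp hx, (memC _ _).mp hy]
      zero_mem' := by show g i * 0 = 0 * g i; simp
      neg_mem' := fun {x} hx => by
        show g i * (-x) = (-x) * g i
        rw [mul_neg, neg_mul, (memC _ _).mp hx] }
  let Zsub : AddSubgroup R :=
    { carrier := ringCenter R
      add_mem' := fun {x y} hx hy r => by rw [mul_add, add_mul, hx r, hy r]
      zero_mem' := fun r => by simp
      neg_mem' := fun {x} hx r => by rw [mul_neg, neg_mul, hx r] }
  have hNatD : ∀ i, Nat.card (Dsub i) = (DF i).card := by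
    intro i
    rw [hDF, ← Set.ncard_eq_toFinset_card', ← Nat.card_coe_set_eq]
    rfl
  have hNatZ : Nat.card Zsub = z := by
    rw [hz, hzF, ← Set.ncard_eq_toFinset_card', ← Nat.card_coe_set_eq]
    rfl
  have hdvd1 : ∀ i, z ∣ (DF i).card := by
    intro i
    rw [← hNatD i, ← hNatZ]
    exact AddSubgroup.card_dvd_of_le (fun x hx => hZD i hx)
  have hdvd2 : ∀ i, (DF i).card ∣ p ^ k := by
    intro i
    rw [← hNatD i, ← hk]
    have := AddSubgroup.card_dvd_of_le (le_top (a := Dsub i))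
    rw [AddSubgroup.card_top] at this
    simpa [Nat.card_eq_fintype_card] using this
  have hzdvd : z ∣ p ^ k := by
    rw [← hNatZ, ← hk]
    have := AddSubgroup.card_dvd_of_le (le_top (a := Zsub))
    rw [AddSubgroup.card_top] at this
    simpa [Nat.card_eq_fintype_card] using this
  have hzlt : ∀ i ≤ p, z < (DF i).card := by
    intro i hip
    apply Finset.card_lt_card
    rw [Finset.ssubset_iff_of_subset (hZFD i)]
    refine ⟨g i, hgDF i, ?_⟩
    rw [hzF, Set.mem_toFinset]
    exact hgZ i hip
  have hlower : ∀ i ≤ p, p * z ≤ (DF i).card := by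
    intro i hip
    obtain ⟨ai, hai, hmi⟩ := (Nat.dvd_prime_pow hp).mp (hdvd2 i)
    obtain ⟨c, hc, hzc⟩ := (Nat.dvd_prime_pow hp).mp hzdvd
    have hca : c < ai := by
      by_contra hca
      have h1 : p ^ ai ≤ p ^ c := Nat.pow_le_pow_right hp.pos (by omega)
      have := hzlt i hip
      omega
    calc p * z = p ^ (c + 1) := by rw [hzc, pow_succ, mul_comm]
      _ ≤ p ^ ai := Nat.pow_le_pow_right hp.pos (by omega)
      _ = (DF i).card := hmi.symm
  have hmiN : ∀ i ≤ p, (DF i).card < N := by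
    intro i hip
    obtain ⟨x, hx⟩ := (Set.ne_univ_iff_exists_notMem _).mp (hDneU i hip)
    have hss : DF i ⊂ Finset.univ := by
      rw [Finset.ssubset_iff_of_subset (Finset.subset_univ _)]
      refine ⟨x, Finset.mem_univ x, ?_⟩
      rw [hDF, Set.mem_toFinset]
      exact hx
    rw [hN, ← Finset.card_univ]
    exact Finset.card_lt_card hss
  have hprod : ∀ i j, i ≤ p → j ≤ p → i ≠ j → (DF i).card * (DF j).card ≤ N * z := by
    intro i j hip hjp hij
    have hmain : (DF i ×ˢ DF j).card ≤ z * (Finset.univ : Finset R).card := by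
      have hfib : ∀ c ∈ (Finset.univ : Finset R),
          ((DF i ×ˢ DF j).filter (fun q : R × R => q.1 + q.2 = c)).card ≤ z := ?_
      · exact Finset.card_le_mul_card_image_of_maps_to
          (f := fun q : R × R => q.1 + q.2) (fun q _ => Finset.mem_univ _) z hfib
      intro c _
      by_cases hne : ((DF i ×ˢ DF j).filter (fun q : R × R => q.1 + q.2 = c)).Nonempty
      · obtain ⟨q0, hq0⟩ := hne
        have hq0' := Finset.mem_filter.mp hq0
        have hq0m := Finset.mem_product.mp hq0'.1
        have hmaps : ∀ q ∈ (DF i ×ˢ DF j).filter (fun q : R × R => q.1 + q.2 = c),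
            q.1 - q0.1 ∈ zF := by
          intro q hq
          have hq' := Finset.mem_filter.mp hq
          have hqm := Finset.mem_product.mp hq'.1
          have hd1 : q.1 - q0.1 ∈ DF i := by
            rw [hDF, Set.mem_toFinset]
            apply hCsub
            · have h := hqm.1
              rw [hDF, Set.mem_toFinset] at h
              exact h
            · have h := hq0m.1
              rw [hDF, Set.mem_toFinset] at h
              exact h
          have hd2 : q.1 - q0.1 ∈ DF j := by
            have heq2 : q.1 - q0.1 = q0.2 - q.2 := by
              rw [sub_eq_sub_iff_add_eq_add, hq'.2.trans hq0'.2.symm]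
              exact add_comm _ _
            rw [heq2, hDF, Set.mem_toFinset]
            apply hCsub
            · have h := hq0m.2
              rw [hDF, Set.mem_toFinset] at h
              exact h
            · have h := hqm.2
              rw [hDF, Set.mem_toFinset] at h
              exact h
          exact hDFcap i j hip hjp hij _ hd1 hd2
        have hinj2 : Set.InjOn (fun q : R × R => q.1 - q0.1)
            ((DF i ×ˢ DF j).filter (fun q : R × R => q.1 + q.2 = c)) := by
          intro q hq q' hq' heq
          have hq1 := (Finset.mem_filter.mp (Finset.mem_coe.mp hq)).2
          have hq'1 := (Finset.mem_filter.mp (Finset.mem_coe.mp hq')).2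
          have h1 : q.1 = q'.1 := sub_left_injective heq
          have h2 : q.2 = q'.2 := by
            have h3 := hq1.trans hq'1.symm
            rw [h1] at h3
            exact add_left_cancel h3
          exact Prod.ext h1 h2
        calc ((DF i ×ˢ DF j).filter (fun q : R × R => q.1 + q.2 = c)).card ≤ zF.card :=
            Finset.card_le_card_of_injOn _ hmaps hinj2
          _ = z := hz.symm
      · rw [Finset.not_nonempty_iff_eq_empty] at hne
        rw [hne]
        simp
    rw [Finset.card_product, Finset.card_univ, ← hN] at hmain
    calc (DF i).card * (DF j).card ≤ z * N := hmain
      _ = N * z := mul_comm _ _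
  have hsize : ∀ i ≤ p, (DF i).card = p * z := by
    intro i hip
    refine le_antisymm ?_ (hlower i hip)
    have hirange : i ∈ Finset.range (p+1) := Finset.mem_range.mpr (by omega)
    have h1 : ∑ j ∈ (Finset.range (p+1)).erase i, ((DF i).card : ℤ) * ((DF j).card : ℤ)
        ≤ ∑ _j ∈ (Finset.range (p+1)).erase i, ((N : ℤ) * z) := by
      apply Finset.sum_le_sum
      intro j hj
      have hj' := Finset.mem_erase.mp hj
      exact_mod_cast hprod i j hip (Nat.lt_succ_iff.mp (Finset.mem_range.mp hj'.2)) (Ne.symm hj'.1)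
    rw [Finset.sum_const, Finset.card_erase_of_mem hirange, Finset.card_range] at h1
    simp only [Nat.add_sub_cancel, nsmul_eq_mul] at h1
    have h3 := Finset.sum_erase_add (Finset.range (p+1)) (fun j => ((DF j).card : ℤ)) hirange
    have h2 : ∑ j ∈ (Finset.range (p+1)).erase i, ((DF j).card : ℤ)
        = (N : ℤ) + p * z - (DF i).card := by
      linarith [h3, hsumZ]
    rw [← Finset.mul_sum, h2] at h1
    have hiN : ((DF i).card : ℤ) < (N : ℤ) := by exact_mod_cast hmiN i hip
    have goalZ : ((DF i).card : ℤ) ≤ (p : ℤ) * z := by nlinarith [h1, hiN]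
    exact_mod_cast goalZ
  have hncard : ∀ i ≤ p, (ringCentralizer (g i)).ncard = p * (ringCenter R).ncard := by
    intro i hip
    have h1 : (ringCentralizer (g i)).ncard = (DF i).card := by
      rw [hDF, Set.ncard_eq_toFinset_card']
    have h2 : (ringCenter R).ncard = z := by
      rw [hz, hzF, Set.ncard_eq_toFinset_card']
    rw [h1, h2, hsize i hip]
  refine ⟨hCuniq, ?_, hinter, hncard, hZD⟩
  intro x hx
  obtain ⟨i, hip, heq⟩ := hCx x hx
  exact ⟨i, hip, heq ▸ ((memC _ _).mpr rfl : x ∈ ringCentralizer x)⟩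

/-- for a finite `(p+2)`-centralizer `p`-ring, the characteristic
polynomial of the adjacency matrix of the commuting graph is
`(X+1)^((p²-1)|Z(R)| - p - 1) * (X - ((p-1)|Z(R)| - 1))^(p+1)`. -/
theorem stmt17 (p : ℕ) (hp : p.Prime) (R : Type*) [NonUnitalRing R] [Fintype R]
    (hpring : ∃ k : ℕ, Fintype.card R = p ^ k)
    (hcent : {S : Set R | ∃ r : R, S = ringCentralizer r}.ncard = p + 2) :
    commCharpoly R ℤ =
      (X + 1) ^ ((p ^ 2 - 1) * (ringCenter R).ncard - p - 1) *
        (X - C (((p : ℤ) - 1) * ((ringCenter R).ncard : ℤ) - 1)) ^ (p + 1) := by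
  classical
  obtain ⟨g, hCuniq, hCx, hinter, hsize, hZD⟩ := part1aux p hp R hpring hcent
  set z := (ringCenter R).ncard with hz
  have hp2 : 2 ≤ p := hp.two_le
  have hz1 : 1 ≤ z := by
    rw [hz]
    have h0 : (0 : R) ∈ ringCenter R := fun r => by simp
    exact (Set.ncard_pos (Set.toFinite _)).mpr ⟨0, h0⟩
  have hexu : ∀ x : {x : R // x ∉ ringCenter R},
      ∃! i : Fin (p+1), (x : R) ∈ ringCentralizer (g i.val) := by
    intro x
    obtain ⟨i, hip, hmem⟩ := hCx x.1 x.2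
    refine ⟨⟨i, by omega⟩, hmem, ?_⟩
    intro j hj
    by_contra hne
    apply x.2
    have hjp : j.val ≤ p := by omega
    exact hinter j.val i hjp hip (fun h => hne (Fin.ext h)) ⟨hj, hmem⟩
  let f : {x : R // x ∉ ringCenter R} → Fin (p+1) := fun x => (hexu x).choose
  have hfmem : ∀ x, (x : R) ∈ ringCentralizer (g (f x).val) := fun x => (hexu x).choose_spec.1
  have hfuniq : ∀ (x : {x : R // x ∉ ringCenter R}) (j : Fin (p+1)),
      (x : R) ∈ ringCentralizer (g j.val) → f x = j :=
    fun x j hj => ((hexu x).choose_spec.2 j hj).symm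
  have hCxD : ∀ x : {x : R // x ∉ ringCenter R},
      ringCentralizer (x : R) = ringCentralizer (g (f x).val) := by
    intro x
    exact hCuniq (f x).val (by omega) x.1 x.2 (hfmem x)
  have hadj : ∀ x y : {x : R // x ∉ ringCenter R},
      (commGraph R).Adj x y ↔ (x ≠ y ∧ f x = f y) := by
    intro x y
    constructor
    · rintro ⟨hne, hcomm⟩
      refine ⟨hne, ?_⟩
      have hyD : (y : R) ∈ ringCentralizer (g (f x).val) := by
        rw [← hCxD x]
        exact hcomm
      exact (hfuniq y (f x) hyD).symm
    · rintro ⟨hne, hf⟩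
      refine ⟨hne, ?_⟩
      have hyD : (y : R) ∈ ringCentralizer ((x : R)) := by
        rw [hCxD x, hf]
        exact hfmem y
      exact hyD
  have hfib : ∀ i : Fin (p+1), Fintype.card {x : {x : R // x ∉ ringCenter R} // f x = i}
      = (p-1) * z := by
    intro i
    have e : {x : {x : R // x ∉ ringCenter R} // f x = i}
        ≃ (ringCentralizer (g i.val) \ ringCenter R : Set R) :=
      { toFun := fun x => ⟨x.1.1, ⟨by have h := hfmem x.1; rw [x.2] at h; exact h, x.1.2⟩⟩
        invFun := fun y => ⟨⟨y.1, y.2.2⟩, hfuniq ⟨y.1, y.2.2⟩ i y.2.1⟩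
        left_inv := fun x => by ext; rfl
        right_inv := fun y => by ext; rfl }
    rw [Fintype.card_congr e, ← Set.toFinset_card, ← Set.ncard_eq_toFinset_card',
      Set.ncard_diff (hZD i.val) (Set.toFinite _), hsize i.val (by omega), ← hz,
      Nat.sub_one_mul]
  have hm1 : 1 ≤ (p-1) * z := Nat.mul_pos (by omega) hz1
  have hcp := charpoly_of_cliques (commGraph R) f ((p-1)*z) hm1 hadj hfib
  have hcc : commCharpoly R ℤ = ((commGraph R).adjMatrix ℤ).charpoly := by
    unfold commCharpoly
    congr 1
  rw [hcc, hcp, Fintype.card_fin, mul_pow, ← pow_mul]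
  have hP2 : 2 * p ≤ p^2 := by
    rw [pow_two]
    exact Nat.mul_le_mul_right p hp2
  have hsq1 : 1 ≤ p^2 := Nat.one_le_pow 2 p hp.pos
  have h12 : p + 2 ≤ p^2 := le_trans (by omega) hP2
  have h1 : p + 1 ≤ p^2 - 1 := Nat.le_sub_of_add_le (by linarith)
  have hz2 : p^2 - 1 ≤ (p^2 - 1) * z := Nat.le_mul_of_pos_right _ hz1
  have hple : p + 1 ≤ (p^2 - 1) * z := le_trans h1 hz2
  have hc1 : p ≤ (p^2 - 1) * z := le_trans (Nat.le_succ p) hple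
  have hc2 : 1 ≤ (p^2 - 1) * z - p := Nat.le_sub_of_add_le (by rw [add_comm]; exact hple)
  have hexp : ((p-1) * z - 1) * (p + 1) = (p ^ 2 - 1) * z - p - 1 := by
    zify [hm1, hp2, hsq1, hple, (by omega : (1:ℕ) ≤ p), hc1, hc2]
    ring
  have heig : (((p-1) * z : ℕ) : ℤ) - 1 = ((p : ℤ) - 1) * (z : ℤ) - 1 := by
    push_cast [Nat.cast_sub (by omega : (1:ℕ) ≤ p)]
    ring
  rw [hexp, heig]
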